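/- arXiv:2605.28417 — 3 statements merged into one kernel-verified Lean document; each statement's English description precedes it below -/
import Mathlib

section
/- Fix m ≥ 1 and n ≥ 1 and constants τ_i > 0, c₁ᵢⱼ > 0, c₂ᵢⱼ > 0, q₁ᵢⱼ ≥ 0, q₂ᵢⱼ > 0, P_aᵢ > 0, and constants k_{ij}, k̃_{ij} ∈ [0,1] and real numbers P_i > 0, M_j ≥ 0, N_{ij} ≥ 0, ζ₁ᵢⱼ, ζ₂ᵢⱼ. The constant functions with these values form an equilibrium of the fused model — i.e. all right-hand sides vanish: (P_i/τ_i)(Σ_j k_{ij} M_j/(Σ_j k̃_{ij} N_{ij} P_i) − 1) = 0, −Σ_i k_{ij} M_j + Σ_i k̃_{ij} N_{ij} P_i = 0, k_{ij} M_j/P_i − k̃_{ij} N_{ij} = 0, c₁ᵢⱼ q₁ᵢⱼ·0 − c₁ᵢⱼ ζ₁ᵢⱼ = 0 and c₂ᵢⱼ q₂ᵢⱼ(1 − P_i/P_aᵢ) − c₂ᵢⱼ ζ₂ᵢⱼ = 0 (assuming Σ_j k̃_{ij} N_{ij} > 0 for each i) — if and only if: ζ₁ᵢⱼ = 0 for all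 i,j; ζ₂ᵢⱼ = q₂ᵢⱼ(1 − P_i/P_aᵢ) for all i,j; and k_{ij} M_j = k̃_{ij} N_{ij} P_i for all i,j. -/
open Finset in
/-- Equilibrium characterization (Section 4.1.1): a constant state of the fused model is an
equilibrium (all right-hand sides of the price, cash, share, trend-sentiment and
value-sentiment equations vanish) if and only if all trend sentiments vanish, the value
sentiments equal `q₂ᵢⱼ (1 − Pᵢ/P_aᵢ)`, and the balance equations (E*)
`kᵢⱼ Mⱼ = k̃ᵢⱼ Nᵢⱼ Pᵢ` hold for every asset–group pair. -/
theorem equilibrium_characterization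
    (m n : ℕ) (hm : 1 ≤ m) (hn : 1 ≤ n)
    (τ : Fin m → ℝ) (hτ : ∀ i, 0 < τ i)
    (c1 c2 q1 q2 : Fin m → Fin n → ℝ)
    (hc1 : ∀ i j, 0 < c1 i j) (hc2 : ∀ i j, 0 < c2 i j)
    (hq1 : ∀ i j, 0 ≤ q1 i j) (hq2 : ∀ i j, 0 < q2 i j)
    (Pa : Fin m → ℝ) (hPa : ∀ i, 0 < Pa i)
    (k ktil : Fin m → Fin n → ℝ)
    (hk : ∀ i j, 0 ≤ k i j ∧ k i j ≤ 1) (hktil : ∀ i j, 0 ≤ ktil i j ∧ ktil i j ≤ 1)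
    (P : Fin m → ℝ) (hP : ∀ i, 0 < P i)
    (M : Fin n → ℝ) (hM : ∀ j, 0 ≤ M j)
    (N : Fin m → Fin n → ℝ) (hN : ∀ i j, 0 ≤ N i j)
    (ζ1 ζ2 : Fin m → Fin n → ℝ)
    (hpos : ∀ i, 0 < ∑ j, ktil i j * N i j) :
    ((∀ i, P i / τ i * ((∑ j, k i j * M j) / (∑ j, ktil i j * N i j * P i) - 1) = 0) ∧
     (∀ j, -(∑ i, k i j * M j) + ∑ i, ktil i j * N i j * P i = 0) ∧
     (∀ i j, k i j * M j / P i - ktil i j * N i j = 0) ∧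
     (∀ i j, c1 i j * q1 i j * 0 - c1 i j * ζ1 i j = 0) ∧
     (∀ i j, c2 i j * q2 i j * (1 - P i / Pa i) - c2 i j * ζ2 i j = 0))
    ↔
    ((∀ i j, ζ1 i j = 0) ∧
     (∀ i j, ζ2 i j = q2 i j * (1 - P i / Pa i)) ∧
     (∀ i j, k i j * M j = ktil i j * N i j * P i)) := by
  constructor
  · rintro ⟨_, _, h3, h4, h5⟩
    refine ⟨fun i j => ?_, fun i j => ?_, fun i j => ?_⟩
    · have := h4 i j
      have hc := (hc1 i j).ne'
      have h0 : c1 i j * ζ1 i j = c1 i j * 0 := by linarith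
      exact mul_left_cancel₀ hc h0
    · have := h5 i j
      have hc := (hc2 i j).ne'
      have h0 : c2 i j * ζ2 i j = c2 i j * (q2 i j * (1 - P i / Pa i)) := by linarith
      exact mul_left_cancel₀ hc h0
    · have := h3 i j
      have hPi := (hP i).ne'
      field_simp at this
      linarith
  · rintro ⟨h1, h2, h3⟩
    have hsum : ∀ i, (∑ j, k i j * M j) = ∑ j, ktil i j * N i j * P i := by
      intro i; exact Finset.sum_congr rfl fun j _ => h3 i j
    refine ⟨fun i => ?_, fun j => ?_, fun i j => ?_, fun i j => ?_, fun i j => ?_⟩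
    · have hd : (∑ j, ktil i j * N i j * P i) ≠ 0 := by
        have : (∑ j, ktil i j * N i j * P i) = (∑ j, ktil i j * N i j) * P i := by
          rw [Finset.sum_mul]
        rw [this]
        exact (mul_pos (hpos i) (hP i)).ne'
      rw [hsum i, div_self hd]
      ring
    · have : (∑ i, k i j * M j) = ∑ i, ktil i j * N i j * P i :=
        Finset.sum_congr rfl fun i _ => h3 i j
      linarith
    · rw [h3 i j, mul_div_assoc, div_self (hP i).ne', mul_one, sub_self]
    · rw [h1 i j]; ring
    · rw [h2 i j]; ring
end

section
/- Fix m ≥ 1, n ≥ 1, T ∈ (0,∞], constants M₀ > 0, τ_i > 0, ε_i > 0. Let P_i, M_j, N_{ij} : [0,T) → ℝ be differentiable and k_{ij}, k̃_{ij} : [0,T) → [0,1] continuous, with P_i(t) > 0, 0 ≤ M_j(t), Σ_j M_j(t) = M₀, N_{ij}(t) ≥ 0 and Σ_j k̃_{ij}(t) N_{ij}(t) ≥ ε_i for all t, and suppose the price equation P_i'(t) = (1/τ_i)·(Σ_j k_{ij}(t) M_j(t) / Σ_j k̃_{ij}(t) N_{ij}(t) − P_i(t)) holds on [0,T). Then for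 every i and every t ∈ [0,T): 0 < P_i(t) ≤ max{P_i(0), M₀/ε_i}. -/
open Finset in
/-- Uniform boundedness of prices (Theorem 2.2, part 1): under the rewritten price equation
`P_i' = (1/τ_i)(Σ_j k_{ij} M_j / Σ_j k̃_{ij} N_{ij} − P_i)`, with rates in `[0,1]`,
nonnegative cash summing to `M₀`, nonnegative shares, aggregate selling intensity bounded
below by `ε_i > 0` and positive prices, every price satisfies
`0 < P_i t ≤ max (P_i 0) (M₀/ε_i)` on `[0, T)`. Here `T ∈ (0, ∞]` is an extended real. -/
theorem price_bounded
    (m n : ℕ) (hm : 1 ≤ m) (hn : 1 ≤ n)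
    (T : EReal) (hT : (0 : EReal) < T)
    (M0 : ℝ) (hM0 : 0 < M0)
    (τ : Fin m → ℝ) (hτ : ∀ i, 0 < τ i)
    (ε : Fin m → ℝ) (hε : ∀ i, 0 < ε i)
    (P : Fin m → ℝ → ℝ) (M : Fin n → ℝ → ℝ) (N : Fin m → Fin n → ℝ → ℝ)
    (k ktil : Fin m → Fin n → ℝ → ℝ)
    (hk_cont : ∀ i j, ContinuousOn (k i j) {t : ℝ | 0 ≤ t ∧ (t : EReal) < T})
    (hktil_cont : ∀ i j, ContinuousOn (ktil i j) {t : ℝ | 0 ≤ t ∧ (t : EReal) < T})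
    (hk : ∀ i j (t : ℝ), 0 ≤ t → (t : EReal) < T → 0 ≤ k i j t ∧ k i j t ≤ 1)
    (hktil : ∀ i j (t : ℝ), 0 ≤ t → (t : EReal) < T → 0 ≤ ktil i j t ∧ ktil i j t ≤ 1)
    (hP_pos : ∀ i (t : ℝ), 0 ≤ t → (t : EReal) < T → 0 < P i t)
    (hM_nonneg : ∀ j (t : ℝ), 0 ≤ t → (t : EReal) < T → 0 ≤ M j t)
    (hM_cons : ∀ (t : ℝ), 0 ≤ t → (t : EReal) < T → ∑ j, M j t = M0)
    (hN_nonneg : ∀ i j (t : ℝ), 0 ≤ t → (t : EReal) < T → 0 ≤ N i j t)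
    (hsell : ∀ i (t : ℝ), 0 ≤ t → (t : EReal) < T → ε i ≤ ∑ j, ktil i j t * N i j t)
    (hP_diff : ∀ i (t : ℝ), 0 ≤ t → (t : EReal) < T →
      HasDerivAt (P i)
        ((1 / τ i) * ((∑ j, k i j t * M j t) / (∑ j, ktil i j t * N i j t) - P i t)) t) :
    ∀ i (t : ℝ), 0 ≤ t → (t : EReal) < T →
      0 < P i t ∧ P i t ≤ max (P i 0) (M0 / ε i) := by
  intro i t ht0 htT
  refine ⟨hP_pos i t ht0 htT, ?_⟩
  set B : ℝ := max (P i 0) (M0 / ε i) with hBdef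
  have hτi := hτ i
  have hεi := hε i
  -- domain membership for s ∈ [0, t]
  have hdom : ∀ s : ℝ, 0 ≤ s → s ≤ t → (s : EReal) < T := fun s hs0 hst =>
    lt_of_le_of_lt (EReal.coe_le_coe_iff.mpr hst) htT
  -- target price bound
  have hQ : ∀ s : ℝ, 0 ≤ s → (s : EReal) < T →
      (∑ j, k i j s * M j s) / (∑ j, ktil i j s * N i j s) ≤ B := by
    intro s hs0 hsT
    have hnum : (∑ j, k i j s * M j s) ≤ M0 := by
      rw [← hM_cons s hs0 hsT]
      refine Finset.sum_le_sum fun j _ => ?_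
      have := hk i j s hs0 hsT
      have := hM_nonneg j s hs0 hsT
      nlinarith
    have hden : ε i ≤ ∑ j, ktil i j s * N i j s := hsell i s hs0 hsT
    calc (∑ j, k i j s * M j s) / (∑ j, ktil i j s * N i j s)
        ≤ M0 / ε i := div_le_div₀ hM0.le hnum hεi hden
      _ ≤ B := le_max_right _ _
  -- auxiliary function
  set h : ℝ → ℝ := fun s => (P i s - B) * Real.exp (s / τ i) with hhdef
  have hderiv : ∀ s : ℝ, 0 ≤ s → (s : EReal) < T →
      HasDerivAt h
        (((1 / τ i) * ((∑ j, k i j s * M j s) / (∑ j, ktil i j s * N i j s) - P i s))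
            * Real.exp (s / τ i)
          + (P i s - B) * (Real.exp (s / τ i) * (1 / τ i))) s := by
    intro s hs0 hsT
    have h1 : HasDerivAt (fun s => P i s - B)
        ((1 / τ i) * ((∑ j, k i j s * M j s) / (∑ j, ktil i j s * N i j s) - P i s)) s :=
      (hP_diff i s hs0 hsT).sub_const B
    have h2 : HasDerivAt (fun s : ℝ => Real.exp (s / τ i))
        (Real.exp (s / τ i) * (1 / τ i)) s :=
      ((hasDerivAt_id s).div_const (τ i)).exp
    exact h1.mul h2
  have hderiv_nonpos : ∀ s : ℝ, 0 ≤ s → (s : EReal) < T →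
      ((1 / τ i) * ((∑ j, k i j s * M j s) / (∑ j, ktil i j s * N i j s) - P i s))
          * Real.exp (s / τ i)
        + (P i s - B) * (Real.exp (s / τ i) * (1 / τ i)) ≤ 0 := by
    intro s hs0 hsT
    have hQs := hQ s hs0 hsT
    have he : 0 < Real.exp (s / τ i) := Real.exp_pos _
    have : ((1 / τ i) * ((∑ j, k i j s * M j s) / (∑ j, ktil i j s * N i j s) - P i s))
          * Real.exp (s / τ i)
        + (P i s - B) * (Real.exp (s / τ i) * (1 / τ i))
        = (1 / τ i) * Real.exp (s / τ i)
            * ((∑ j, k i j s * M j s) / (∑ j, ktil i j s * N i j s) - B) := by ring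
    rw [this]
    have h1 : 0 < (1 / τ i) * Real.exp (s / τ i) := by positivity
    have h2 : (∑ j, k i j s * M j s) / (∑ j, ktil i j s * N i j s) - B ≤ 0 := by linarith
    exact mul_nonpos_of_nonneg_of_nonpos h1.le h2
  -- h is antitone on [0, t]
  have hanti : AntitoneOn h (Set.Icc 0 t) := by
    refine antitoneOn_of_deriv_nonpos (convex_Icc 0 t) ?_ ?_ ?_
    · intro s hs
      exact (hderiv s hs.1 (hdom s hs.1 hs.2)).differentiableAt.continuousAt.continuousWithinAt
    · intro s hs
      rw [interior_Icc] at hs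
      exact (hderiv s hs.1.le (hdom s hs.1.le hs.2.le)).differentiableAt.differentiableWithinAt
    · intro s hs
      rw [interior_Icc] at hs
      rw [(hderiv s hs.1.le (hdom s hs.1.le hs.2.le)).deriv]
      exact hderiv_nonpos s hs.1.le (hdom s hs.1.le hs.2.le)
  have hht : h t ≤ h 0 := hanti (Set.left_mem_Icc.mpr ht0) (Set.right_mem_Icc.mpr ht0) ht0
  have hh0 : h 0 ≤ 0 := by
    simp only [hhdef, zero_div, Real.exp_zero, mul_one]
    have : P i 0 ≤ B := le_max_left _ _
    linarith
  have hht0 : (P i t - B) * Real.exp (t / τ i) ≤ 0 := le_trans hht hh0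
  have he : 0 < Real.exp (t / τ i) := Real.exp_pos _
  nlinarith
end

section
/- Fix m ≥ 1, n ≥ 1, constants M₀ > 0, N₀ᵢ > 0, P_maxᵢ > 0, Z₁ > 0, Z₂ > 0, τ_i > 0, ε_i > 0, c₁ᵢⱼ, c₂ᵢⱼ > 0, q₁ᵢⱼ, q₂ᵢⱼ ≥ 0, P_aᵢ > 0, with M₀/ε_i ≤ P_maxᵢ, q₁ᵢⱼ·sup-bound of the relative price change ≤ Z₁ and q₂ᵢⱼ·(1 + P_maxᵢ/P_aᵢ) ≤ Z₂. Suppose differentiable functions P_i, M_j, N_{ij}, ζ₁ᵢⱼ, ζ₂ᵢⱼ on [0,∞) satisfy the fused-model ODEs with continuous transition rates k_{ij}, k̃_{ij} taking values in [0,1] and with Σ_j k̃_{ij}(t) N_{ij}(t) ≥ ε_i for all t, and suppose the initial state lies in the region Ω defined by: 0 < P_i ≤ P_maxᵢ, M_j ∈ [0, M₀], N_{ij} ∈ [0, N₀ᵢ], Σ_j M_j = M₀, Σ_j N_{ij} = N₀ᵢ, |ζ₁ᵢⱼ| ≤ Z₁, |ζ₂ᵢⱼ| ≤ Z₂, with the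 conservation laws Σ_j M_j(t) = M₀ and Σ_j N_{ij}(t) = N₀ᵢ holding for all t ≥ 0. Then the trajectory remains in Ω for all t ≥ 0; that is, Ω is positively invariant under the flow of the fused model. -/
/-!
On any time interval where the prices are positive, the cash–share subsystem is cooperative:
a cash or share component sitting at a level `-δ`, with all other components `≥ -δ`, has
derivative `≥ -Kδ`, where `K` comes from upper bounds for `P` and `1/P` on the interval.
Adding `η e^{(K+1)t}` makes the derivative strictly positive at the first exit time, so the
holdings stay nonnegative. With nonnegative holdings each price relaxes, at rate `1/τᵢ`,
towards the target `Σⱼ kᵢⱼ Mⱼ / Σⱼ k̃ᵢⱼ Nᵢⱼ ∈ [0, M₀/εᵢ]`; the integrating factor `e^{t/τᵢ}`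
keeps it positive and below `P_maxᵢ`, and a first-exit argument on the prices closes the
circle. Likewise each sentiment relaxes towards a forcing bounded by its `Z`, and the upper
bounds on cash and shares come from the conservation laws.
-/

open Set Filter Topology Real Finset

section FirstExit

variable {ι : Type*} [Finite ι] {F F' : ι → ℝ → ℝ} {b : ℝ}

theorem pos_of_pos_before (hF : ∀ i, ContinuousOn (F i) (Icc 0 b)) (h0 : ∀ i, 0 < F i 0)
    (hstep : ∀ c ∈ Ioc 0 b, (∀ s ∈ Ico 0 c, ∀ i, 0 < F i s) → ∀ i, 0 < F i c) :
    ∀ t ∈ Icc 0 b, ∀ i, 0 < F i t := by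
  by_contra! hbad
  obtain ⟨t, ht, i, hi⟩ := hbad
  set S := ⋃ i, Icc 0 b ∩ F i ⁻¹' Iic 0
  have hS_closed : IsClosed S := isClosed_iUnion_of_finite fun i =>
    (hF i).preimage_isClosed_of_isClosed isClosed_Icc isClosed_Iic
  have hS_bdd : BddBelow S := ⟨0, fun s hs => by
    obtain ⟨_, hs, _⟩ := mem_iUnion.1 hs
    exact hs.1⟩
  obtain ⟨j, ⟨hc0, hcb⟩, hj⟩ :=
    mem_iUnion.1 (hS_closed.csInf_mem ⟨t, mem_iUnion.2 ⟨i, ht, hi⟩⟩ hS_bdd)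
  have hc_pos : 0 < sInf S := hc0.lt_of_ne fun h => (h0 j).not_ge (h ▸ hj)
  refine (hstep _ ⟨hc_pos, hcb⟩ (fun s hs i => ?_) j).not_ge hj
  by_contra! hle
  exact (csInf_le hS_bdd (mem_iUnion.2 ⟨i, ⟨hs.1, hs.2.le.trans hcb⟩, hle⟩)).not_gt hs.2

theorem HasDerivAt.nonpos_of_le_left {f : ℝ → ℝ} {f' a c : ℝ} (hf : HasDerivAt f f' c)
    (ha : a < c) (hle : ∀ s ∈ Ioo a c, f c ≤ f s) : f' ≤ 0 := by
  have hslope : Tendsto (slope f c) (𝓝[<] c) (𝓝 f') :=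
    (hasDerivAt_iff_tendsto_slope.1 hf).mono_left (nhdsWithin_mono c fun s hs => ne_of_lt hs)
  refine le_of_tendsto hslope ?_
  filter_upwards [Ioo_mem_nhdsLT ha] with s hs
  rw [slope_def_field]
  exact div_nonpos_of_nonneg_of_nonpos (sub_nonneg.2 (hle s hs)) (sub_nonpos.2 hs.2.le)

theorem pos_of_deriv_pos_at_zero (hF : ∀ i, ∀ t ∈ Icc 0 b, HasDerivAt (F i) (F' i t) t)
    (h0 : ∀ i, 0 < F i 0)
    (hbdry : ∀ t ∈ Icc 0 b, (∀ j, 0 ≤ F j t) → ∀ i, F i t = 0 → 0 < F' i t) :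
    ∀ t ∈ Icc 0 b, ∀ i, 0 < F i t := by
  refine pos_of_pos_before (fun i => HasDerivAt.continuousOn (hF i)) h0 fun c hc hpos => ?_
  have hcIcc : c ∈ Icc 0 b := ⟨hc.1.le, hc.2⟩
  have hnonneg : ∀ j, 0 ≤ F j c := fun j => by
    have hlim : Tendsto (F j) (𝓝[<] c) (𝓝 (F j c)) :=
      (hF j c hcIcc).continuousAt.tendsto.mono_left nhdsWithin_le_nhds
    refine ge_of_tendsto hlim ?_
    filter_upwards [Ioo_mem_nhdsLT hc.1] with s hs
    exact (hpos s ⟨hs.1.le, hs.2⟩ j).le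
  refine fun i => (hnonneg i).lt_of_ne' fun hzero => ?_
  refine (hbdry c hcIcc hnonneg i hzero).not_ge ((hF i c hcIcc).nonpos_of_le_left hc.1 ?_)
  exact fun s hs => hzero ▸ (hpos s ⟨hs.1.le, hs.2⟩ i).le

theorem nonneg_of_deriv_ge_at_neg_level {K : ℝ}
    (hF : ∀ i, ∀ t ∈ Icc 0 b, HasDerivAt (F i) (F' i t) t) (h0 : ∀ i, 0 ≤ F i 0)
    (hbdry : ∀ t ∈ Icc 0 b, ∀ δ > 0, (∀ j, -δ ≤ F j t) → ∀ i, F i t = -δ →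
      -(K * δ) ≤ F' i t) :
    ∀ t ∈ Icc 0 b, ∀ i, 0 ≤ F i t := by
  have hperturbed : ∀ η > 0, ∀ t ∈ Icc 0 b, ∀ i, 0 < F i t + η * exp ((K + 1) * t) := by
    intro η hη
    refine pos_of_deriv_pos_at_zero
      (F' := fun i t => F' i t + η * (exp ((K + 1) * t) * (K + 1)))
      (fun i t ht => (hF i t ht).add
        (((hasDerivAt_id' t).const_mul (K + 1)).exp.const_mul η |>.congr_deriv (by ring)))
      (fun i => by simpa using add_pos_of_nonneg_of_pos (h0 i) hη) ?_
    intro t ht hall i hzero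
    have hδ : 0 < η * exp ((K + 1) * t) := by positivity
    have := hbdry t ht _ hδ (fun j => by linarith [hall j]) i (by linarith)
    linarith
  intro t ht i
  by_contra! hneg
  have hE : 0 < exp ((K + 1) * t) := exp_pos _
  have := hperturbed (-F i t / exp ((K + 1) * t)) (div_pos (neg_pos.2 hneg) hE) t ht i
  rw [div_mul_cancel₀ _ hE.ne'] at this
  linarith

end FirstExit

section Relaxation

variable {f f' : ℝ → ℝ} {a r : ℝ}

theorem monotoneOn_sub_mul_exp_of_deriv_ge {b : ℝ} (hf : ContinuousOn f (Icc 0 b))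
    (hderiv : ∀ t ∈ Ioo 0 b, HasDerivAt f (f' t) t)
    (hge : ∀ t ∈ Ioo 0 b, r * (a - f t) ≤ f' t) :
    MonotoneOn (fun t => (f t - a) * exp (r * t)) (Icc 0 b) := by
  have hd : ∀ t ∈ Ioo 0 b, HasDerivAt (fun t => (f t - a) * exp (r * t))
      (exp (r * t) * (f' t - r * (a - f t))) t := fun t ht =>
    (((hderiv t ht).sub_const a).mul ((hasDerivAt_id' t).const_mul r).exp).congr_deriv
      (by ring)
  refine monotoneOn_of_deriv_nonneg (convex_Icc 0 b)
    ((hf.sub continuousOn_const).mul (by fun_prop)) ?_ ?_ <;> rw [interior_Icc]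
  · exact fun t ht => (hd t ht).differentiableAt.differentiableWithinAt
  · intro t ht
    rw [(hd t ht).deriv]
    exact mul_nonneg (exp_pos _).le (sub_nonneg.2 (hge t ht))

theorem le_of_mul_sub_le_deriv (hderiv : ∀ t, 0 ≤ t → HasDerivAt f (f' t) t)
    (hge : ∀ t, 0 ≤ t → r * (a - f t) ≤ f' t) (h0 : a ≤ f 0) {t : ℝ} (ht : 0 ≤ t) :
    a ≤ f t := by
  have hmono := monotoneOn_sub_mul_exp_of_deriv_ge (b := t)
    (HasDerivAt.continuousOn fun s hs => hderiv s hs.1) (fun s hs => hderiv s hs.1.le)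
    (fun s hs => hge s hs.1.le)
  have := hmono ⟨le_rfl, ht⟩ ⟨ht, le_rfl⟩ ht
  simp only [mul_zero, exp_zero, mul_one] at this
  exact sub_nonneg.1 ((mul_nonneg_iff_of_pos_right (exp_pos _)).1 ((sub_nonneg.2 h0).trans this))

theorem abs_le_of_abs_deriv_add_le {Z : ℝ} (hderiv : ∀ t, 0 ≤ t → HasDerivAt f (f' t) t)
    (hbound : ∀ t, 0 ≤ t → |f' t + r * f t| ≤ r * Z) (h0 : |f 0| ≤ Z) {t : ℝ} (ht : 0 ≤ t) :
    |f t| ≤ Z := by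
  rw [abs_le] at h0 ⊢
  constructor
  · refine le_of_mul_sub_le_deriv (r := r) hderiv (fun s hs => ?_) h0.1 ht
    linarith [(abs_le.1 (hbound s hs)).1]
  · refine neg_le_neg_iff.1 (le_of_mul_sub_le_deriv (f := fun s => -f s) (a := -Z) (r := r)
      (fun s hs => (hderiv s hs).neg) (fun s hs => ?_) (neg_le_neg h0.2) ht)
    linarith [(abs_le.1 (hbound s hs)).2]

end Relaxation

theorem exists_forall_le_of_continuousOn {X ι : Type*} [TopologicalSpace X] [Finite ι]
    {f : ι → X → ℝ} {K : Set X} (hK : IsCompact K) (hf : ∀ i, ContinuousOn (f i) K) :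
    ∃ C, ∀ i, ∀ t ∈ K, f i t ≤ C := by
  choose C hC using fun i => hK.bddAbove_image (hf i)
  obtain ⟨C', hC'⟩ := Finite.bddAbove_range C
  exact ⟨C', fun i t ht => (hC i (mem_image_of_mem _ ht)).trans (hC' ⟨i, rfl⟩)⟩

theorem neg_le_mul_of_mem_Icc {a x δ : ℝ} (ha : a ∈ Icc (0 : ℝ) 1) (hδ : 0 ≤ δ)
    (hx : -δ ≤ x) : -δ ≤ a * x := by
  rcases le_total 0 x with hx0 | hx0
  · nlinarith [ha.1]
  · nlinarith [ha.2]

theorem abs_mul_mul_le_of_le {c q x B Z : ℝ} (hc : 0 ≤ c) (hq : 0 ≤ q) (hx : |x| ≤ B)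
    (hZ : q * B ≤ Z) : |c * q * x| ≤ c * Z := by
  rw [mul_assoc, abs_mul, abs_of_nonneg hc, abs_mul, abs_of_nonneg hq]
  exact mul_le_mul_of_nonneg_left ((mul_le_mul_of_nonneg_left hx hq).trans hZ) hc

theorem abs_one_sub_div_le {p pmax a : ℝ} (hp : 0 ≤ p) (hpmax : p ≤ pmax) (ha : 0 < a) :
    |1 - p / a| ≤ 1 + pmax / a := by
  have h1 : 0 ≤ p / a := div_nonneg hp ha.le
  have h2 : p / a ≤ pmax / a := div_le_div_of_nonneg_right hpmax ha.le
  rw [abs_le]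
  constructor <;> linarith

theorem cash_rate_ge_of_eq_neg {ι : Type*} [Fintype ι] {k ktil N P : ι → ℝ} {x δ C : ℝ}
    (hδ : 0 ≤ δ) (hx : x = -δ) (hk : ∀ i, 0 ≤ k i) (hktil : ∀ i, ktil i ∈ Icc (0 : ℝ) 1)
    (hN : ∀ i, -δ ≤ N i) (hP : ∀ i, 0 ≤ P i) (hC : ∀ i, P i ≤ C) :
    -(Fintype.card ι * C * δ) ≤ -(∑ i, k i * x) + ∑ i, ktil i * N i * P i := by
  have hout : 0 ≤ -(∑ i, k i * x) :=
    neg_nonneg.2 <| sum_nonpos fun i _ =>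
      mul_nonpos_of_nonneg_of_nonpos (hk i) (hx ▸ neg_nonpos.2 hδ)
  have hin : ∑ _i : ι, -(δ * C) ≤ ∑ i, ktil i * N i * P i := sum_le_sum fun i _ => by
    have := neg_le_mul_of_mem_Icc (hktil i) hδ (hN i)
    nlinarith [hC i, hP i]
  simp only [sum_const, card_univ, nsmul_eq_mul] at hin
  linarith

theorem shares_rate_ge_of_eq_neg {k ktil x y p δ D : ℝ} (hδ : 0 ≤ δ) (hy : y = -δ)
    (hk : k ∈ Icc (0 : ℝ) 1) (hktil : 0 ≤ ktil) (hx : -δ ≤ x) (hp : 0 < p) (hD : p⁻¹ ≤ D) :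
    -(D * δ) ≤ k * x / p - ktil * y := by
  have hin : -(δ * D) ≤ k * x / p := by
    rw [div_eq_mul_inv]
    calc -(δ * D) ≤ -δ * p⁻¹ := by nlinarith
      _ ≤ _ := mul_le_mul_of_nonneg_right (neg_le_mul_of_mem_Icc hk hδ hx) (inv_nonneg.2 hp.le)
  have hout : 0 ≤ -(ktil * y) := by
    rw [hy]
    nlinarith
  linarith

section FusedModel

variable {ι κ : Type*} [Fintype κ] {P : ι → ℝ → ℝ} {M : κ → ℝ → ℝ}
  {N : ι → κ → ℝ → ℝ} {k ktil : ι → κ → ℝ → ℝ}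

theorem hasDerivAt_price_of_pos {τ t : ℝ} {i : ι}
    (hP_diff : HasDerivAt (P i)
      (P i t / τ * ((∑ j, k i j t * M j t) / (∑ j, ktil i j t * N i j t * P i t) - 1)) t)
    (hS : ∑ j, ktil i j t * N i j t ≠ 0) (hP : P i t ≠ 0) :
    HasDerivAt (P i)
      (τ⁻¹ * ((∑ j, k i j t * M j t) / (∑ j, ktil i j t * N i j t) - P i t)) t := by
  refine hP_diff.congr_deriv ?_
  rw [← sum_mul]
  field_simp

theorem price_le_of_cash_nonneg {τ ε Pmax : ι → ℝ} {M0 : ℝ} (hτ : ∀ i, 0 < τ i) (hε : ∀ i, 0 < ε i)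
    (hcap : ∀ i, M0 / ε i ≤ Pmax i)
    (hk : ∀ i j (t : ℝ), 0 ≤ t → 0 ≤ k i j t ∧ k i j t ≤ 1)
    (hsell : ∀ i (t : ℝ), 0 ≤ t → ε i ≤ ∑ j, ktil i j t * N i j t)
    (hP_diff : ∀ i (t : ℝ), 0 ≤ t → HasDerivAt (P i)
      (P i t / τ i *
        ((∑ j, k i j t * M j t) / (∑ j, ktil i j t * N i j t * P i t) - 1)) t)
    (hM_cons : ∀ (t : ℝ), 0 ≤ t → ∑ j, M j t = M0)
    (hP : ∀ t, 0 ≤ t → ∀ i, 0 < P i t) (hM : ∀ t, 0 ≤ t → ∀ j, 0 ≤ M j t)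
    (hP0 : ∀ i, P i 0 ≤ Pmax i) {t : ℝ} (ht : 0 ≤ t) (i : ι) : P i t ≤ Pmax i := by
  have hS : ∀ s, 0 ≤ s → 0 < ∑ j, ktil i j s * N i j s := fun s hs =>
    (hε i).trans_le (hsell i s hs)
  have htarget : ∀ s, 0 ≤ s →
      (∑ j, k i j s * M j s) / (∑ j, ktil i j s * N i j s) ≤ Pmax i := fun s hs => by
    have hX : ∑ j, k i j s * M j s ≤ M0 := hM_cons s hs ▸
      sum_le_sum fun j _ => mul_le_of_le_one_left (hM s hs j) (hk i j s hs).2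
    have hM0 : 0 ≤ M0 := hM_cons s hs ▸ sum_nonneg fun j _ => hM s hs j
    exact (div_le_div₀ hM0 hX (hε i) (hsell i s hs)).trans (hcap i)
  refine neg_le_neg_iff.1 (le_of_mul_sub_le_deriv (f := fun s => -P i s) (a := -Pmax i)
    (r := (τ i)⁻¹) (fun s hs => (hasDerivAt_price_of_pos (hP_diff i s hs) (hS s hs).ne'
      (hP s hs i).ne').neg) (fun s hs => ?_) (neg_le_neg (hP0 i)) ht)
  have := mul_le_mul_of_nonneg_left (htarget s hs) (inv_nonneg.2 (hτ i).le)
  linarith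

variable [Fintype ι]

theorem cash_shares_nonneg_of_price_pos {b : ℝ}
    (hk : ∀ i j (t : ℝ), 0 ≤ t → 0 ≤ k i j t ∧ k i j t ≤ 1)
    (hktil : ∀ i j (t : ℝ), 0 ≤ t → 0 ≤ ktil i j t ∧ ktil i j t ≤ 1)
    (hM_diff : ∀ j (t : ℝ), 0 ≤ t → HasDerivAt (M j)
      (-(∑ i, k i j t * M j t) + ∑ i, ktil i j t * N i j t * P i t) t)
    (hN_diff : ∀ i j (t : ℝ), 0 ≤ t → HasDerivAt (N i j)
      (k i j t * M j t / P i t - ktil i j t * N i j t) t)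
    (hM0 : ∀ j, 0 ≤ M j 0) (hN0 : ∀ i j, 0 ≤ N i j 0)
    (hPcont : ∀ i, ContinuousOn (P i) (Icc 0 b)) (hPpos : ∀ t ∈ Icc 0 b, ∀ i, 0 < P i t) :
    ∀ t ∈ Icc 0 b, (∀ j, 0 ≤ M j t) ∧ ∀ i j, 0 ≤ N i j t := by
  obtain ⟨C, hC⟩ := exists_forall_le_of_continuousOn isCompact_Icc hPcont
  obtain ⟨D, hD⟩ := exists_forall_le_of_continuousOn (f := fun i t => (P i t)⁻¹)
    isCompact_Icc fun i => (hPcont i).inv₀ fun t ht => (hPpos t ht i).ne'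
  have key := nonneg_of_deriv_ge_at_neg_level (b := b) (K := max (Fintype.card ι * C) D)
    (F := Sum.elim M fun ij : ι × κ => N ij.1 ij.2)
    (F' := Sum.elim (fun j t => -(∑ i, k i j t * M j t) + ∑ i, ktil i j t * N i j t * P i t)
      fun (ij : ι × κ) t =>
        k ij.1 ij.2 t * M ij.2 t / P ij.1 t - ktil ij.1 ij.2 t * N ij.1 ij.2 t)
    (by rintro (j | ⟨i, j⟩) t ht; exacts [hM_diff j t ht.1, hN_diff i j t ht.1])
    (by rintro (j | ⟨i, j⟩); exacts [hM0 j, hN0 i j]) ?_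
  · exact fun t ht => ⟨fun j => key t ht (.inl j), fun i j => key t ht (.inr (i, j))⟩
  intro t ht δ hδ hall
  rintro (j | ⟨i, j⟩) hzero
  · refine le_trans ?_ (cash_rate_ge_of_eq_neg hδ.le hzero (fun i => (hk i j t ht.1).1)
      (fun i => hktil i j t ht.1) (fun i => hall (.inr (i, j))) (fun i => (hPpos t ht i).le)
      (fun i => hC i t ht))
    exact neg_le_neg (mul_le_mul_of_nonneg_right (le_max_left _ _) hδ.le)
  · refine le_trans ?_ (shares_rate_ge_of_eq_neg hδ.le hzero (hk i j t ht.1)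
      (hktil i j t ht.1).1 (hall (.inl j)) (hPpos t ht i) (hD i t ht))
    exact neg_le_neg (mul_le_mul_of_nonneg_right (le_max_right _ _) hδ.le)

theorem prices_pos {τ ε : ι → ℝ} (hτ : ∀ i, 0 < τ i) (hε : ∀ i, 0 < ε i)
    (hk : ∀ i j (t : ℝ), 0 ≤ t → 0 ≤ k i j t ∧ k i j t ≤ 1)
    (hktil : ∀ i j (t : ℝ), 0 ≤ t → 0 ≤ ktil i j t ∧ ktil i j t ≤ 1)
    (hsell : ∀ i (t : ℝ), 0 ≤ t → ε i ≤ ∑ j, ktil i j t * N i j t)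
    (hP_diff : ∀ i (t : ℝ), 0 ≤ t → HasDerivAt (P i)
      (P i t / τ i *
        ((∑ j, k i j t * M j t) / (∑ j, ktil i j t * N i j t * P i t) - 1)) t)
    (hM_diff : ∀ j (t : ℝ), 0 ≤ t → HasDerivAt (M j)
      (-(∑ i, k i j t * M j t) + ∑ i, ktil i j t * N i j t * P i t) t)
    (hN_diff : ∀ i j (t : ℝ), 0 ≤ t → HasDerivAt (N i j)
      (k i j t * M j t / P i t - ktil i j t * N i j t) t)
    (hP0 : ∀ i, 0 < P i 0) (hM0 : ∀ j, 0 ≤ M j 0) (hN0 : ∀ i j, 0 ≤ N i j 0)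
    {t : ℝ} (ht : 0 ≤ t) : ∀ i, 0 < P i t := by
  have hPcont : ∀ b i, ContinuousOn (P i) (Icc 0 b) := fun b i =>
    HasDerivAt.continuousOn fun s hs => hP_diff i s hs.1
  refine pos_of_pos_before (hPcont t) hP0 (fun c hc hpos i => ?_) t ⟨ht, le_rfl⟩
  have hM : ∀ s ∈ Ico 0 c, ∀ j, 0 ≤ M j s := fun s hs =>
    (cash_shares_nonneg_of_price_pos hk hktil hM_diff hN_diff hM0 hN0 (hPcont s)
      (fun u hu => hpos u ⟨hu.1, hu.2.trans_lt hs.2⟩) s ⟨hs.1, le_rfl⟩).1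
  have hS : ∀ s, 0 ≤ s → 0 < ∑ j, ktil i j s * N i j s := fun s hs =>
    (hε i).trans_le (hsell i s hs)
  -- up to the first zero of the prices the holdings are nonnegative, so the target is too
  have hmono := monotoneOn_sub_mul_exp_of_deriv_ge (a := 0) (r := (τ i)⁻¹) (hPcont c i)
    (fun s hs => hasDerivAt_price_of_pos (hP_diff i s hs.1.le) (hS s hs.1.le).ne'
      (hpos s ⟨hs.1.le, hs.2⟩ i).ne')
    (fun s hs => mul_le_mul_of_nonneg_left (sub_le_sub_right (div_nonneg
      (sum_nonneg fun j _ => mul_nonneg (hk i j s hs.1.le).1 (hM s ⟨hs.1.le, hs.2⟩ j))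
      (hS s hs.1.le).le) _) (inv_nonneg.2 (hτ i).le))
  have := hmono ⟨le_rfl, hc.1.le⟩ ⟨hc.1.le, le_rfl⟩ hc.1.le
  simp only [sub_zero, mul_zero, exp_zero, mul_one] at this
  exact pos_of_mul_pos_left ((hP0 i).trans_le this) (exp_pos _).le

end FusedModel

open Finset in
theorem invariant_region_general
    (m n : ℕ)
    (M0 : ℝ)
    (N0 Pmax : Fin m → ℝ)
    (Z1 Z2 : ℝ)
    (τ ε : Fin m → ℝ) (hτ : ∀ i, 0 < τ i) (hε : ∀ i, 0 < ε i)
    (c1 c2 q1 q2 : Fin m → Fin n → ℝ)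
    (hc1 : ∀ i j, 0 < c1 i j) (hc2 : ∀ i j, 0 < c2 i j)
    (hq1 : ∀ i j, 0 ≤ q1 i j) (hq2 : ∀ i j, 0 ≤ q2 i j)
    (Pa : Fin m → ℝ) (hPa : ∀ i, 0 < Pa i)
    (hcap : ∀ i, M0 / ε i ≤ Pmax i)
    (P : Fin m → ℝ → ℝ) (M : Fin n → ℝ → ℝ) (N : Fin m → Fin n → ℝ → ℝ)
    (ζ1 ζ2 : Fin m → Fin n → ℝ → ℝ)
    (k ktil : Fin m → Fin n → ℝ → ℝ)
    (hk : ∀ i j (t : ℝ), 0 ≤ t → 0 ≤ k i j t ∧ k i j t ≤ 1)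
    (hktil : ∀ i j (t : ℝ), 0 ≤ t → 0 ≤ ktil i j t ∧ ktil i j t ≤ 1)
    (hsell : ∀ i (t : ℝ), 0 ≤ t → ε i ≤ ∑ j, ktil i j t * N i j t)
    -- the fused-model ODEs
    (hP_diff : ∀ i (t : ℝ), 0 ≤ t → HasDerivAt (P i)
      (P i t / τ i *
        ((∑ j, k i j t * M j t) / (∑ j, ktil i j t * N i j t * P i t) - 1)) t)
    (hM_diff : ∀ j (t : ℝ), 0 ≤ t → HasDerivAt (M j)
      (-(∑ i, k i j t * M j t) + ∑ i, ktil i j t * N i j t * P i t) t)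
    (hN_diff : ∀ i j (t : ℝ), 0 ≤ t → HasDerivAt (N i j)
      (k i j t * M j t / P i t - ktil i j t * N i j t) t)
    (hζ1_diff : ∀ i j (t : ℝ), 0 ≤ t → HasDerivAt (ζ1 i j)
      (c1 i j * q1 i j *
          ((P i t / τ i *
            ((∑ j', k i j' t * M j' t) / (∑ j', ktil i j' t * N i j' t * P i t) - 1))
            / P i t)
        - c1 i j * ζ1 i j t) t)
    (hζ2_diff : ∀ i j (t : ℝ), 0 ≤ t → HasDerivAt (ζ2 i j)
      (c2 i j * q2 i j * (1 - P i t / Pa i) - c2 i j * ζ2 i j t) t)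
    -- uniform bound on the relative price change and the sentiment calibration bounds
    (G : ℝ)
    (hrel : ∀ i (t : ℝ), 0 ≤ t →
      |(P i t / τ i *
          ((∑ j, k i j t * M j t) / (∑ j, ktil i j t * N i j t * P i t) - 1)) / P i t| ≤ G)
    (hZ1cal : ∀ i j, q1 i j * G ≤ Z1)
    (hZ2cal : ∀ i j, q2 i j * (1 + Pmax i / Pa i) ≤ Z2)
    -- conservation laws hold for all t ≥ 0
    (hM_cons : ∀ (t : ℝ), 0 ≤ t → ∑ j, M j t = M0)
    (hN_cons : ∀ i (t : ℝ), 0 ≤ t → ∑ j, N i j t = N0 i)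
    -- the initial state lies in Ω
    (hP0 : ∀ i, 0 < P i 0 ∧ P i 0 ≤ Pmax i)
    (hM0' : ∀ j, 0 ≤ M j 0 ∧ M j 0 ≤ M0)
    (hN0' : ∀ i j, 0 ≤ N i j 0 ∧ N i j 0 ≤ N0 i)
    (hζ10 : ∀ i j, |ζ1 i j 0| ≤ Z1)
    (hζ20 : ∀ i j, |ζ2 i j 0| ≤ Z2) :
    -- then the trajectory remains in Ω for all t ≥ 0
    ∀ (t : ℝ), 0 ≤ t →
      (∀ i, 0 < P i t ∧ P i t ≤ Pmax i) ∧
      (∀ j, 0 ≤ M j t ∧ M j t ≤ M0) ∧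
      (∀ i j, 0 ≤ N i j t ∧ N i j t ≤ N0 i) ∧
      (∑ j, M j t = M0) ∧
      (∀ i, ∑ j, N i j t = N0 i) ∧
      (∀ i j, |ζ1 i j t| ≤ Z1) ∧
      (∀ i j, |ζ2 i j t| ≤ Z2) := by
  have hP : ∀ t, 0 ≤ t → ∀ i, 0 < P i t := fun t ht =>
    prices_pos hτ hε hk hktil hsell hP_diff hM_diff hN_diff (fun i => (hP0 i).1)
      (fun j => (hM0' j).1) (fun i j => (hN0' i j).1) ht
  have hMN : ∀ t, 0 ≤ t → (∀ j, 0 ≤ M j t) ∧ ∀ i j, 0 ≤ N i j t := fun t ht =>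
    cash_shares_nonneg_of_price_pos hk hktil hM_diff hN_diff (fun j => (hM0' j).1)
      (fun i j => (hN0' i j).1) (fun i => HasDerivAt.continuousOn fun s hs => hP_diff i s hs.1)
      (fun s hs => hP s hs.1) t ⟨ht, le_rfl⟩
  have hPle : ∀ t, 0 ≤ t → ∀ i, P i t ≤ Pmax i := fun t ht =>
    price_le_of_cash_nonneg hτ hε hcap hk hsell hP_diff hM_cons hP (fun s hs => (hMN s hs).1)
      (fun i => (hP0 i).2) ht
  intro t ht
  refine ⟨fun i => ⟨hP t ht i, hPle t ht i⟩,
    fun j => ⟨(hMN t ht).1 j,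
      hM_cons t ht ▸ single_le_sum (fun j _ => (hMN t ht).1 j) (mem_univ j)⟩,
    fun i j => ⟨(hMN t ht).2 i j,
      hN_cons i t ht ▸ single_le_sum (fun j _ => (hMN t ht).2 i j) (mem_univ j)⟩,
    hM_cons t ht, fun i => hN_cons i t ht, fun i j => ?_, fun i j => ?_⟩
  · refine abs_le_of_abs_deriv_add_le (r := c1 i j) (hζ1_diff i j) (fun s hs => ?_) (hζ10 i j) ht
    rw [sub_add_cancel]
    exact abs_mul_mul_le_of_le (hc1 i j).le (hq1 i j) (hrel i s hs) (hZ1cal i j)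
  · refine abs_le_of_abs_deriv_add_le (r := c2 i j) (hζ2_diff i j) (fun s hs => ?_) (hζ20 i j) ht
    rw [sub_add_cancel]
    exact abs_mul_mul_le_of_le (hc2 i j).le (hq2 i j)
      (abs_one_sub_div_le (hP s hs i).le (hPle s hs i) (hPa i)) (hZ2cal i j)

open Finset in
/-- Invariant region (Corollary 2.3): for a solution of the fused asset flow model on
`[0, ∞)` — prices, cash, shares and sentiments evolving by the price, cash, share and
sentiment ODEs with transition rates in `[0,1]`, aggregate selling intensity bounded below
by `ε_i`, conservation laws holding for all times, `M₀/ε_i ≤ P_maxᵢ`, a uniform bound `G`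
on the relative price change with `q₁ᵢⱼ·G ≤ Z₁`, and `q₂ᵢⱼ·(1 + P_maxᵢ/P_aᵢ) ≤ Z₂` —
if the initial state lies in the region `Ω` (positivity, boundedness and conservation
constraints), then the trajectory remains in `Ω` for all `t ≥ 0`. -/
theorem invariant_region
    (m n : ℕ) (hm : 1 ≤ m) (hn : 1 ≤ n)
    (M0 : ℝ) (hM0 : 0 < M0)
    (N0 Pmax : Fin m → ℝ) (hN0 : ∀ i, 0 < N0 i) (hPmax : ∀ i, 0 < Pmax i)
    (Z1 Z2 : ℝ) (hZ1 : 0 < Z1) (hZ2 : 0 < Z2)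
    (τ ε : Fin m → ℝ) (hτ : ∀ i, 0 < τ i) (hε : ∀ i, 0 < ε i)
    (c1 c2 q1 q2 : Fin m → Fin n → ℝ)
    (hc1 : ∀ i j, 0 < c1 i j) (hc2 : ∀ i j, 0 < c2 i j)
    (hq1 : ∀ i j, 0 ≤ q1 i j) (hq2 : ∀ i j, 0 ≤ q2 i j)
    (Pa : Fin m → ℝ) (hPa : ∀ i, 0 < Pa i)
    (hcap : ∀ i, M0 / ε i ≤ Pmax i)
    (P : Fin m → ℝ → ℝ) (M : Fin n → ℝ → ℝ) (N : Fin m → Fin n → ℝ → ℝ)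
    (ζ1 ζ2 : Fin m → Fin n → ℝ → ℝ)
    (k ktil : Fin m → Fin n → ℝ → ℝ)
    (hk_cont : ∀ i j, ContinuousOn (k i j) (Set.Ici (0 : ℝ)))
    (hktil_cont : ∀ i j, ContinuousOn (ktil i j) (Set.Ici (0 : ℝ)))
    (hk : ∀ i j (t : ℝ), 0 ≤ t → 0 ≤ k i j t ∧ k i j t ≤ 1)
    (hktil : ∀ i j (t : ℝ), 0 ≤ t → 0 ≤ ktil i j t ∧ ktil i j t ≤ 1)
    (hsell : ∀ i (t : ℝ), 0 ≤ t → ε i ≤ ∑ j, ktil i j t * N i j t)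
    -- the fused-model ODEs
    (hP_diff : ∀ i (t : ℝ), 0 ≤ t → HasDerivAt (P i)
      (P i t / τ i *
        ((∑ j, k i j t * M j t) / (∑ j, ktil i j t * N i j t * P i t) - 1)) t)
    (hM_diff : ∀ j (t : ℝ), 0 ≤ t → HasDerivAt (M j)
      (-(∑ i, k i j t * M j t) + ∑ i, ktil i j t * N i j t * P i t) t)
    (hN_diff : ∀ i j (t : ℝ), 0 ≤ t → HasDerivAt (N i j)
      (k i j t * M j t / P i t - ktil i j t * N i j t) t)
    (hζ1_diff : ∀ i j (t : ℝ), 0 ≤ t → HasDerivAt (ζ1 i j)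
      (c1 i j * q1 i j *
          ((P i t / τ i *
            ((∑ j', k i j' t * M j' t) / (∑ j', ktil i j' t * N i j' t * P i t) - 1))
            / P i t)
        - c1 i j * ζ1 i j t) t)
    (hζ2_diff : ∀ i j (t : ℝ), 0 ≤ t → HasDerivAt (ζ2 i j)
      (c2 i j * q2 i j * (1 - P i t / Pa i) - c2 i j * ζ2 i j t) t)
    -- uniform bound on the relative price change and the sentiment calibration bounds
    (G : ℝ) (hG : 0 ≤ G)
    (hrel : ∀ i (t : ℝ), 0 ≤ t →
      |(P i t / τ i *
          ((∑ j, k i j t * M j t) / (∑ j, ktil i j t * N i j t * P i t) - 1)) / P i t| ≤ G)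
    (hZ1cal : ∀ i j, q1 i j * G ≤ Z1)
    (hZ2cal : ∀ i j, q2 i j * (1 + Pmax i / Pa i) ≤ Z2)
    -- conservation laws hold for all t ≥ 0
    (hM_cons : ∀ (t : ℝ), 0 ≤ t → ∑ j, M j t = M0)
    (hN_cons : ∀ i (t : ℝ), 0 ≤ t → ∑ j, N i j t = N0 i)
    -- the initial state lies in Ω
    (hP0 : ∀ i, 0 < P i 0 ∧ P i 0 ≤ Pmax i)
    (hM0' : ∀ j, 0 ≤ M j 0 ∧ M j 0 ≤ M0)
    (hN0' : ∀ i j, 0 ≤ N i j 0 ∧ N i j 0 ≤ N0 i)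
    (hζ10 : ∀ i j, |ζ1 i j 0| ≤ Z1)
    (hζ20 : ∀ i j, |ζ2 i j 0| ≤ Z2) :
    -- then the trajectory remains in Ω for all t ≥ 0
    ∀ (t : ℝ), 0 ≤ t →
      (∀ i, 0 < P i t ∧ P i t ≤ Pmax i) ∧
      (∀ j, 0 ≤ M j t ∧ M j t ≤ M0) ∧
      (∀ i j, 0 ≤ N i j t ∧ N i j t ≤ N0 i) ∧
      (∑ j, M j t = M0) ∧
      (∀ i, ∑ j, N i j t = N0 i) ∧
      (∀ i j, |ζ1 i j t| ≤ Z1) ∧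
      (∀ i j, |ζ2 i j t| ≤ Z2) :=
  invariant_region_general m n M0 N0 Pmax Z1 Z2 τ ε hτ hε c1 c2 q1 q2 hc1 hc2 hq1 hq2 Pa hPa hcap P
    M N ζ1 ζ2 k ktil hk hktil hsell hP_diff hM_diff hN_diff hζ1_diff hζ2_diff G hrel hZ1cal hZ2cal
    hM_cons hN_cons hP0 hM0' hN0' hζ10 hζ20
end
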